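/- arXiv:1409.0467 — 2 statements merged into one kernel-verified Lean document; each statement's English description precedes it below -/
import Mathlib

section
/- Let (R, m, k) be a Noetherian local ring of dimension d and prime characteristic p, and let M be a finitely generated R-module. Then there exists a constant C > 0 such that for all e ≥ 0 and every m-primary ideal I containing m^[q] with q = p^e, one has λ(M/IM) ≤ C·q^{dim M}. -/
open IsLocalRing

/-- The `q`-th Frobenius power `I^[q]`: the ideal generated by `q`-th powers of elements of `I`. -/
noncomputable def frobPow {R : Type*} [CommRing R] (I : Ideal R) (q : ℕ) : Ideal R :=
  Ideal.span ((fun x => x ^ q) '' (I : Set R))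

/-- The length of an `R`-module, as a natural number. -/
noncomputable def len (R M : Type*) [Ring R] [AddCommGroup M] [Module R M] : ℕ :=
  (WithBot.unbotD 0 (Order.krullDim (Submodule R M))).toNat

/-- `I` is `m`-primary: a proper ideal containing a power of the maximal ideal. -/
def IsMPrimary {R : Type*} [CommRing R] [IsLocalRing R] (I : Ideal R) : Prop :=
  I ≠ ⊤ ∧ ∃ n : ℕ, maximalIdeal R ^ n ≤ I

/-!
Lift a system of parameters `x₁, …, xₙ` of `R ⧸ ann M` to `R`, so that `n = dim M` and
`M ⧸ (x) M` has finite length `ℓ`. Since `xᵢ ∈ m`, every `xᵢ^q` lies in `m^[q] ⊆ I`, so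
`λ(M/IM) ≤ λ(M/(x^q)M)`. Multiplication by `y` shows `λ(N/xyN) ≤ λ(N/xN) + λ(N/yN)`, so raising
one parameter to the `q`-th power multiplies the length by at most `q`, and
`λ(M/(x^q)M) ≤ q^n ℓ`.
-/

lemma len_eq_toNat_length (R M : Type*) [Ring R] [AddCommGroup M] [Module R M] :
    len R M = (Module.length R M).toNat := by
  rw [len, ← Module.coe_length, WithBot.unbotD_coe]

section Length

variable {R M : Type*} [CommRing R] [AddCommGroup M] [Module R M]

lemma Module.length_quotient_le_of_le {P Q : Submodule R M} (h : P ≤ Q) :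
    Module.length R (M ⧸ Q) ≤ Module.length R (M ⧸ P) := by
  simpa only [Module.length_quotient] using Order.coheight_anti h

lemma Module.length_quotient_eq_length_map_mkQ_add {A B : Submodule R M} (h : B ≤ A) :
    Module.length R (M ⧸ B) = Module.length R (A.map B.mkQ) + Module.length R (M ⧸ A) := by
  rw [Module.length_eq_add_of_exact (A.map B.mkQ).subtype (A.map B.mkQ).mkQ
    (Submodule.subtype_injective _) (Submodule.mkQ_surjective _) (LinearMap.exact_subtype_mkQ _),
    (Submodule.quotientQuotientEquivQuotient B A h).length_eq]

/-- Multiplication by `y` maps `M ⧸ (J + (x)) M` onto `(J + (y)) M ⧸ (J + (xy)) M`. -/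
lemma length_quotient_sup_span_mul_smul_top_le (J : Ideal R) (x y : R) :
    Module.length R (M ⧸ (J ⊔ Ideal.span {x * y}) • (⊤ : Submodule R M)) ≤
      Module.length R (M ⧸ (J ⊔ Ideal.span {x}) • (⊤ : Submodule R M)) +
      Module.length R (M ⧸ (J ⊔ Ideal.span {y}) • (⊤ : Submodule R M)) := by
  set B := (J ⊔ Ideal.span {x * y}) • (⊤ : Submodule R M)
  set A := (J ⊔ Ideal.span {y}) • (⊤ : Submodule R M)
  have hBA : B ≤ A := Submodule.smul_mono_left <| sup_le_sup_left
    (Ideal.span_singleton_le_span_singleton.mpr (dvd_mul_left y x)) J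
  let φ : M →ₗ[R] M ⧸ B := B.mkQ ∘ₗ LinearMap.lsmul R M y
  have hker : (J ⊔ Ideal.span {x}) • (⊤ : Submodule R M) ≤ LinearMap.ker φ := by
    have hideal : (J ⊔ Ideal.span {x}) * Ideal.span {y} ≤ J ⊔ Ideal.span {x * y} := by
      rw [Ideal.sup_mul, Ideal.span_singleton_mul_span_singleton]
      exact sup_le_sup_right Ideal.mul_le_left _
    refine Submodule.smul_le.mpr fun r hr m _ => ?_
    have hry : r * y ∈ J ⊔ Ideal.span {x * y} :=
      hideal (Ideal.mul_mem_mul hr (Ideal.mem_span_singleton_self y))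
    change B.mkQ (y • r • m) = 0
    rw [smul_smul, mul_comm, Submodule.mkQ_apply, Submodule.Quotient.mk_eq_zero]
    exact Submodule.smul_mem_smul hry Submodule.mem_top
  have hrange : A.map B.mkQ ≤ LinearMap.range φ := by
    rw [Submodule.map_le_iff_le_comap]
    refine Submodule.smul_le.mpr fun r hr m _ => ?_
    obtain ⟨j, hj, _, hs, rfl⟩ := Submodule.mem_sup.mp hr
    obtain ⟨c, rfl⟩ := Ideal.mem_span_singleton'.mp hs
    have hjm : j • (Submodule.Quotient.mk m : M ⧸ B) = 0 := by
      rw [← Submodule.Quotient.mk_smul, Submodule.Quotient.mk_eq_zero]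
      exact Submodule.smul_mem_smul (Submodule.mem_sup_left hj) Submodule.mem_top
    exact ⟨c • m, by simp [φ, add_smul, hjm, smul_smul, mul_comm]⟩
  rw [Module.length_quotient_eq_length_map_mkQ_add hBA]
  gcongr
  calc Module.length R (A.map B.mkQ) ≤ Module.length R (LinearMap.range φ) :=
        Module.length_le_of_injective _ (Submodule.inclusion_injective hrange)
    _ ≤ _ := Module.length_le_of_surjective
        (Submodule.liftQ _ φ.rangeRestrict (by rwa [LinearMap.ker_rangeRestrict])) <| by
          rw [← LinearMap.range_eq_top, Submodule.range_liftQ, LinearMap.range_rangeRestrict]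

lemma length_quotient_sup_span_pow_smul_top_le (J : Ideal R) (x : R) (a : ℕ) :
    Module.length R (M ⧸ (J ⊔ Ideal.span {x ^ a}) • (⊤ : Submodule R M)) ≤
      a * Module.length R (M ⧸ (J ⊔ Ideal.span {x}) • (⊤ : Submodule R M)) := by
  induction a with
  | zero => simp
  | succ a ih =>
    rw [pow_succ, Nat.cast_succ, add_one_mul]
    exact (length_quotient_sup_span_mul_smul_top_le J _ _).trans (by gcongr)

lemma length_quotient_sup_span_image_pow_smul_top_le (q : ℕ) (s : Finset R) (J : Ideal R) :
    Module.length R (M ⧸ (J ⊔ Ideal.span ((· ^ q) '' (s : Set R))) • (⊤ : Submodule R M)) ≤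
      q ^ s.card * Module.length R (M ⧸ (J ⊔ Ideal.span (s : Set R)) • (⊤ : Submodule R M)) := by
  classical
  induction s using Finset.induction_on generalizing J with
  | empty => rw [Finset.coe_empty, Set.image_empty, Finset.card_empty, pow_zero, one_mul]
  | insert a s ha ih =>
    rw [Finset.coe_insert, Set.image_insert_eq, Ideal.span_insert, Ideal.span_insert,
      Finset.card_insert_of_notMem ha, ← sup_assoc, ← sup_assoc, sup_right_comm J]
    calc _ ≤ q * Module.length R
          (M ⧸ (J ⊔ Ideal.span ((· ^ q) '' (s : Set R)) ⊔ Ideal.span {a}) • (⊤ : Submodule R M)) :=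
          length_quotient_sup_span_pow_smul_top_le _ a q
      _ ≤ q * (q ^ s.card * Module.length R
          (M ⧸ (J ⊔ Ideal.span {a} ⊔ Ideal.span (s : Set R)) • (⊤ : Submodule R M))) := by
          rw [sup_right_comm]
          gcongr
          exact ih _
      _ = _ := by rw [pow_succ]; ring

lemma Module.length_quotient_smul_top_ne_top [Module.Finite R M] (J : Ideal R)
    [IsArtinianRing (R ⧸ J)] : Module.length R (M ⧸ J • (⊤ : Submodule R M)) ≠ ⊤ := by
  rw [Module.length_eq_of_surjective (R := R ⧸ J) Ideal.Quotient.mk_surjective]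
  exact Module.length_ne_top

end Length

/-- A system of parameters of `R ⧸ K`, lifted to `R`. -/
theorem IsLocalRing.exists_finset_card_eq_ringKrullDim_quotient {R : Type*} [CommRing R]
    [IsLocalRing R] [IsNoetherianRing R] (K : Ideal R) (hK : K ≠ ⊤) :
    ∃ s : Finset R, (s.card : WithBot ℕ∞) = ringKrullDim (R ⧸ K) ∧
      maximalIdeal R ∈ (K ⊔ Ideal.span s).minimalPrimes := by
  classical
  have : Nontrivial (R ⧸ K) := Ideal.Quotient.nontrivial_iff.mpr hK
  have : IsLocalRing (R ⧸ K) := .of_surjective' _ Ideal.Quotient.mk_surjective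
  have : IsLocalHom (Ideal.Quotient.mk K) := .of_surjective _ Ideal.Quotient.mk_surjective
  obtain ⟨t, ht, hcard⟩ :=
    (maximalIdeal (R ⧸ K)).exists_finset_card_eq_height_of_isNoetherianRing
  set σ := Function.surjInv (Ideal.Quotient.mk_surjective (I := K))
  refine ⟨t.image σ, ?_, ?_⟩
  · rw [Finset.card_image_of_injective _ (Function.injective_surjInv _),
      ← maximalIdeal_height_eq_ringKrullDim, ← hcard]
    rfl
  · have ht_map : Ideal.span (t : Set (R ⧸ K)) = (Ideal.span (t.image σ : Set R)).map
        (Ideal.Quotient.mk K) := by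
      rw [Ideal.map_span, Finset.coe_image, Set.image_image]
      simp [σ, Function.surjInv_eq]
    have hcomap : (Ideal.span (t : Set (R ⧸ K))).comap (Ideal.Quotient.mk K) =
        K ⊔ Ideal.span (t.image σ : Set R) := by
      rw [ht_map, Ideal.comap_map_of_surjective _ Ideal.Quotient.mk_surjective,
        ← RingHom.ker_eq_comap_bot, Ideal.mk_ker, sup_comm]
    rw [← hcomap, ← maximalIdeal_comap (Ideal.Quotient.mk K)]
    exact Ideal.minimalPrimes_comap_of_surjective Ideal.Quotient.mk_surjective ht

theorem IsLocalRing.exists_length_quotient_smul_top_le_pow_mul {R M : Type*} [CommRing R]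
    [IsLocalRing R] [IsNoetherianRing R] [AddCommGroup M] [Module R M] [Module.Finite R M]
    {n : ℕ} (hn : ringKrullDim (R ⧸ Module.annihilator R M) = n) :
    ∃ ℓ : ℕ, ∀ (q : ℕ) (I : Ideal R), frobPow (maximalIdeal R) q ≤ I →
      Module.length R (M ⧸ I • (⊤ : Submodule R M)) ≤ (q ^ n * ℓ : ℕ) := by
  have hK : Module.annihilator R M ≠ ⊤ := by
    rintro hK
    rw [hK, ringKrullDim_eq_bot_of_subsingleton] at hn
    exact WithBot.bot_ne_coe hn
  obtain ⟨s, hcard, hmin⟩ := exists_finset_card_eq_ringKrullDim_quotient _ hK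
  rw [hn, Nat.cast_inj] at hcard
  have := quotient_artinian_of_mem_minimalPrimes_of_isLocalRing _ hmin
  obtain ⟨ℓ, hℓ⟩ := ENat.ne_top_iff_exists.mp
    (Module.length_quotient_smul_top_ne_top (M := M) (Module.annihilator R M ⊔ Ideal.span s))
  refine ⟨ℓ, fun q I hI => ?_⟩
  have hs : (s : Set R) ⊆ maximalIdeal R := fun x hx =>
    hmin.1.2 (Ideal.mem_sup_right (Ideal.subset_span hx))
  have hsI : (Module.annihilator R M ⊔ Ideal.span ((· ^ q) '' (s : Set R))) •
      (⊤ : Submodule R M) ≤ I • ⊤ := by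
    rw [Submodule.sup_smul, ← Submodule.annihilator_top, Submodule.annihilator_smul, bot_sup_eq]
    exact Submodule.smul_mono_left ((Ideal.span_mono (Set.image_mono hs)).trans hI)
  calc _ ≤ _ := Module.length_quotient_le_of_le hsI
    _ ≤ _ := length_quotient_sup_span_image_pow_smul_top_le q s _
    _ = _ := by rw [← hℓ, hcard]; push_cast; rfl

theorem length_quotient_le_const_mul_q_pow_dim_general
    (R : Type*) [CommRing R] [IsLocalRing R] [IsNoetherianRing R]
    (p : ℕ)
    (M : Type*) [AddCommGroup M] [Module R M] [Module.Finite R M]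
    (dM : ℕ) (hdimM : ringKrullDim (R ⧸ Module.annihilator R M) = dM) :
    ∃ C : ℝ, 0 < C ∧ ∀ e : ℕ, ∀ I : Ideal R, IsMPrimary I →
      frobPow (maximalIdeal R) (p ^ e) ≤ I →
      (len R (M ⧸ (I • (⊤ : Submodule R M))) : ℝ) ≤ C * (p : ℝ) ^ (e * dM) := by
  obtain ⟨ℓ, hℓ⟩ := exists_length_quotient_smul_top_le_pow_mul hdimM
  refine ⟨ℓ + 1, by positivity, fun e I _ hI => ?_⟩
  calc (len R (M ⧸ I • (⊤ : Submodule R M)) : ℝ) ≤ ((p ^ e) ^ dM * ℓ : ℕ) := by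
        rw [len_eq_toNat_length]
        exact_mod_cast ENat.toNat_le_of_le_natCast (hℓ _ I hI)
    _ ≤ (ℓ + 1) * (p : ℝ) ^ (e * dM) := by
        rw [pow_mul, mul_comm]
        push_cast
        gcongr
        linarith

theorem length_quotient_le_const_mul_q_pow_dim
    (R : Type*) [CommRing R] [IsLocalRing R] [IsNoetherianRing R]
    (p : ℕ) [Fact p.Prime] [CharP R p]
    (d : ℕ) (hdim : ringKrullDim R = d)
    (M : Type*) [AddCommGroup M] [Module R M] [Module.Finite R M]
    (dM : ℕ) (hdimM : ringKrullDim (R ⧸ Module.annihilator R M) = dM) :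
    ∃ C : ℝ, 0 < C ∧ ∀ e : ℕ, ∀ I : Ideal R, IsMPrimary I →
      frobPow (maximalIdeal R) (p ^ e) ≤ I →
      (len R (M ⧸ (I • (⊤ : Submodule R M))) : ℝ) ≤ C * (p : ℝ) ^ (e * dM) :=
  length_quotient_le_const_mul_q_pow_dim_general R p M dM hdimM
end

section
/- Let R be a Noetherian ring of prime characteristic p and I an ideal. Then x ∈ I* if and only if for every minimal prime P of R, the image of x in R/P lies in the tight closure of (I+P)/P. -/
/-- The tight closure of an ideal `I` in a ring of characteristic `p`:
`x ∈ I*` iff there is `c` outside every minimal prime with `c x^q ∈ I^[q]`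
for all large `q = p^e`. -/
def tightClosure {R : Type*} [CommRing R] (p : ℕ) (I : Ideal R) : Set R :=
  {x | ∃ c : R, (∀ P ∈ minimalPrimes R, c ∉ P) ∧
    ∃ N : ℕ, ∀ e : ℕ, N ≤ e → c * x ^ p ^ e ∈ frobPow I (p ^ e)}

/-!
Reducing a witness `c ∈ R°` modulo a minimal prime `P` gives the forward direction.
Conversely, each minimal prime `P` yields `c_P ∉ P` with `c_P x^q ∈ I^[q] + P` for large `q`,
and an element `d_P ∉ P` lying in all other minimal primes, so that `d_P P` is nilpotent.
The `c` with `c x^q ∈ I^[q] + nil(R)` for large `q` form an ideal containing every `d_P c_P`,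
hence contained in no minimal prime, so by prime avoidance it meets `R°`. Finally, as `R` is
Noetherian, `n^(p^k) = 0` for all nilpotent `n` and some fixed `k`, so raising to the `p^k`-th
power removes the nilradical: `c^(p^k) x^(q p^k) ∈ I^[q p^k]`.
-/

open Filter

section FrobeniusPower

variable {R : Type*} [CommRing R]

lemma pow_mem_frobPow {I : Ideal R} {a : R} (ha : a ∈ I) (q : ℕ) : a ^ q ∈ frobPow I q :=
  Ideal.subset_span ⟨a, ha, rfl⟩

lemma map_frobPow_of_surjective {S : Type*} [CommRing S] {f : R →+* S}
    (hf : Function.Surjective f) (I : Ideal R) (q : ℕ) :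
    (frobPow I q).map f = frobPow (I.map f) q := by
  refine le_antisymm ?_ ?_
  · rw [frobPow, Ideal.map_span, Ideal.span_le]
    rintro _ ⟨_, ⟨a, ha, rfl⟩, rfl⟩
    rw [map_pow]
    exact pow_mem_frobPow (Ideal.mem_map_of_mem f ha) q
  · rw [frobPow, Ideal.span_le]
    rintro _ ⟨_, hb, rfl⟩
    obtain ⟨a, ha, rfl⟩ := (Ideal.mem_map_iff_of_surjective f hf).1 hb
    simpa only [SetLike.mem_coe, map_pow] using Ideal.mem_map_of_mem f (pow_mem_frobPow ha q)

lemma Ideal.Quotient.mk_mem_frobPow_map_iff {P I : Ideal R} {y : R} {q : ℕ} :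
    Ideal.Quotient.mk P y ∈ frobPow (I.map (Ideal.Quotient.mk P)) q ↔ y ∈ frobPow I q ⊔ P := by
  rw [← map_frobPow_of_surjective Ideal.Quotient.mk_surjective, Ideal.mem_quotient_iff_mem_sup]

lemma pow_expChar_pow_mem_frobPow_mul {p : ℕ} [ExpChar R p] {I : Ideal R} {q : ℕ} {y : R}
    (hy : y ∈ frobPow I q) (k : ℕ) : y ^ p ^ k ∈ frobPow I (q * p ^ k) := by
  induction hy using Submodule.span_induction with
  | mem _ h =>
    obtain ⟨a, ha, rfl⟩ := h
    rw [← pow_mul]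
    exact pow_mem_frobPow ha _
  | zero => simp [zero_pow (expChar_pow_pos R p k).ne']
  | add a b _ _ ha hb => rw [add_pow_expChar_pow]; exact add_mem ha hb
  | smul r a _ ha => rw [smul_eq_mul, mul_pow]; exact Ideal.mul_mem_left _ _ ha

lemma pow_expChar_pow_mem_frobPow_mul_of_mem_sup {p : ℕ} [ExpChar R p] {I K : Ideal R}
    {q k : ℕ} (hK : ∀ n ∈ K, n ^ p ^ k = 0) {y : R} (hy : y ∈ frobPow I q ⊔ K) :
    y ^ p ^ k ∈ frobPow I (q * p ^ k) := by
  obtain ⟨a, ha, n, hn, rfl⟩ := Submodule.mem_sup.1 hy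
  rw [add_pow_expChar_pow, hK n hn, add_zero]
  exact pow_expChar_pow_mem_frobPow_mul ha k

end FrobeniusPower

section MinimalPrimes

variable {R : Type*} [CommRing R]

lemma Ideal.Quotient.forall_mk_notMem_minimalPrimes_iff {P : Ideal R} [P.IsPrime] {c : R} :
    (∀ Q ∈ minimalPrimes (R ⧸ P), Ideal.Quotient.mk P c ∉ Q) ↔ c ∉ P := by
  simp [IsDomain.minimalPrimes_eq_singleton_bot, Ideal.Quotient.eq_zero_iff_mem]

lemma exists_mem_forall_notMem_minimalPrimes (hfin : (minimalPrimes R).Finite) {J : Ideal R}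
    (hJ : ∀ P ∈ minimalPrimes R, ¬ J ≤ P) : ∃ c ∈ J, ∀ P ∈ minimalPrimes R, c ∉ P := by
  have hsub : ¬ (J : Set R) ⊆ ⋃ P ∈ minimalPrimes R, P := by
    rw [Ideal.subset_union_prime_finite hfin ⊥ ⊥ fun P hP _ _ => hP.1.1]
    simpa using hJ
  simpa [Set.subset_def] using hsub

lemma exists_notMem_forall_mul_mem_nilradical (hfin : (minimalPrimes R).Finite) {P : Ideal R}
    (hP : P ∈ minimalPrimes R) : ∃ d ∉ P, ∀ z ∈ P, d * z ∈ nilradical R := by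
  set others := hfin.toFinset.erase P
  have hnle : ¬ others.inf id ≤ P := by
    rw [hP.1.1.inf_le']
    rintro ⟨Q, hQ, hQP⟩
    obtain ⟨hQP', hQ⟩ := Finset.mem_erase.1 hQ
    exact hQP' (le_antisymm hQP (hP.2 ((Set.Finite.mem_toFinset hfin).1 hQ).1 hQP))
  obtain ⟨d, hd, hdP⟩ := SetLike.not_le_iff_exists.1 hnle
  refine ⟨d, hdP, fun z hz => ?_⟩
  rw [nilradical, ← Ideal.sInf_minimalPrimes, Ideal.mem_sInf]
  intro Q hQ
  by_cases hQP : Q = P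
  · exact Ideal.mul_mem_left _ _ (hQP ▸ hz)
  · exact Ideal.mul_mem_right _ _ <| Finset.inf_le (f := id)
      (Finset.mem_erase.2 ⟨hQP, (Set.Finite.mem_toFinset hfin).2 hQ⟩) hd

end MinimalPrimes

section TightClosure

variable {R : Type*} [CommRing R]

def Ideal.eventuallyColon (J : ℕ → Ideal R) (y : ℕ → R) : Ideal R where
  carrier := {c | ∀ᶠ e in atTop, c * y e ∈ J e}
  add_mem' ha hb := (ha.and hb).mono fun e h => by rw [add_mul]; exact add_mem h.1 h.2
  zero_mem' := Eventually.of_forall fun e => by simp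
  smul_mem' r c hc := hc.mono fun e h => by
    rw [smul_eq_mul, mul_assoc]; exact Ideal.mul_mem_left _ _ h

lemma Ideal.mem_eventuallyColon {J : ℕ → Ideal R} {y : ℕ → R} {c : R} :
    c ∈ Ideal.eventuallyColon J y ↔ ∀ᶠ e in atTop, c * y e ∈ J e :=
  Iff.rfl

lemma Ideal.eventuallyColon_mono {J J' : ℕ → Ideal R} (h : ∀ e, J e ≤ J' e) (y : ℕ → R) :
    Ideal.eventuallyColon J y ≤ Ideal.eventuallyColon J' y :=
  fun _ hc => hc.mono fun e he => h e he

lemma Ideal.mul_mem_eventuallyColon_sup {J : ℕ → Ideal R} {P K : Ideal R} {y : ℕ → R} {c d : R}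
    (hd : ∀ z ∈ P, d * z ∈ K) (hc : c ∈ Ideal.eventuallyColon (fun e => J e ⊔ P) y) :
    d * c ∈ Ideal.eventuallyColon (fun e => J e ⊔ K) y := by
  refine hc.mono fun e he => ?_
  obtain ⟨a, ha, z, hz, hy⟩ := Submodule.mem_sup.1 he
  rw [mul_assoc, ← hy, mul_add]
  exact add_mem (Ideal.mem_sup_left (Ideal.mul_mem_left _ _ ha)) (Ideal.mem_sup_right (hd z hz))

lemma mem_tightClosure_iff {p : ℕ} {I : Ideal R} {x : R} :
    x ∈ tightClosure p I ↔ ∃ c ∈ Ideal.eventuallyColon (fun e => frobPow I (p ^ e)) (x ^ p ^ ·),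
      ∀ P ∈ minimalPrimes R, c ∉ P := by
  simp only [tightClosure, Ideal.mem_eventuallyColon, eventually_atTop, Set.mem_ofPred_eq]
  exact exists_congr fun c => and_comm

lemma Ideal.Quotient.mk_mem_tightClosure_map_iff {p : ℕ} {I P : Ideal R} [P.IsPrime] {x : R} :
    Ideal.Quotient.mk P x ∈ tightClosure p (I.map (Ideal.Quotient.mk P)) ↔
      ∃ c ∉ P, c ∈ Ideal.eventuallyColon (fun e => frobPow I (p ^ e) ⊔ P) (x ^ p ^ ·) := by
  rw [mem_tightClosure_iff]
  constructor
  · rintro ⟨c, hc, hcP⟩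
    obtain ⟨c, rfl⟩ := Ideal.Quotient.mk_surjective c
    refine ⟨c, Ideal.Quotient.forall_mk_notMem_minimalPrimes_iff.1 hcP, hc.mono fun e he => ?_⟩
    beta_reduce at he ⊢
    rwa [← map_pow, ← map_mul, Ideal.Quotient.mk_mem_frobPow_map_iff] at he
  · rintro ⟨c, hcP, hc⟩
    refine ⟨Ideal.Quotient.mk P c, hc.mono fun e he => ?_,
      Ideal.Quotient.forall_mk_notMem_minimalPrimes_iff.2 hcP⟩
    beta_reduce at he ⊢
    rwa [← map_pow, ← map_mul, Ideal.Quotient.mk_mem_frobPow_map_iff]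

lemma exists_forall_mem_nilradical_pow_pow_eq_zero [IsNoetherianRing R] {p : ℕ} (hp : 1 < p) :
    ∃ k, ∀ n ∈ nilradical R, n ^ p ^ k = 0 := by
  obtain ⟨k, hk⟩ := IsNoetherianRing.isNilpotent_nilradical R
  refine ⟨k, fun n hn => ?_⟩
  have : n ^ p ^ k ∈ nilradical R ^ k :=
    Ideal.pow_le_pow_right (Nat.lt_pow_self hp).le (Ideal.pow_mem_pow hn _)
  simpa [hk] using this

lemma mem_tightClosure_of_forall_minimalPrimes_not_le [IsNoetherianRing R] {p : ℕ}
    [Fact p.Prime] [CharP R p] {I : Ideal R} {x : R}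
    (h : ∀ P ∈ minimalPrimes R,
      ¬ Ideal.eventuallyColon (fun e => frobPow I (p ^ e) ⊔ nilradical R) (x ^ p ^ ·) ≤ P) :
    x ∈ tightClosure p I := by
  obtain ⟨c, hc, hcP⟩ :=
    exists_mem_forall_notMem_minimalPrimes (minimalPrimes.finite_of_isNoetherianRing R) h
  obtain ⟨k, hk⟩ :=
    exists_forall_mem_nilradical_pow_pow_eq_zero (R := R) (Fact.out : p.Prime).one_lt
  refine mem_tightClosure_iff.2 ⟨c ^ p ^ k, ?_, fun P hP h => hcP P hP (hP.1.1.mem_of_pow_mem _ h)⟩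
  filter_upwards [(tendsto_sub_atTop_nat k).eventually hc, eventually_ge_atTop k] with e he hke
  have := pow_expChar_pow_mem_frobPow_mul_of_mem_sup hk he
  rwa [← pow_add, Nat.sub_add_cancel hke, mul_pow, ← pow_mul, ← pow_add, Nat.sub_add_cancel hke]
    at this

end TightClosure

theorem mem_tightClosure_iff_forall_minimalPrime
    (R : Type*) [CommRing R] [IsNoetherianRing R]
    (p : ℕ) [Fact p.Prime] [CharP R p]
    (I : Ideal R) (x : R) :
    x ∈ tightClosure p I ↔
      ∀ P ∈ minimalPrimes R,
        Ideal.Quotient.mk P x ∈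
          tightClosure p (I.map (Ideal.Quotient.mk P)) := by
  refine ⟨fun hx P hP => ?_, fun h => mem_tightClosure_of_forall_minimalPrimes_not_le ?_⟩
  · have := hP.1.1
    obtain ⟨c, hc, hcP⟩ := mem_tightClosure_iff.1 hx
    exact Ideal.Quotient.mk_mem_tightClosure_map_iff.2
      ⟨c, hcP P hP, Ideal.eventuallyColon_mono (fun _ => le_sup_left) _ hc⟩
  · intro P hP hle
    have := hP.1.1
    obtain ⟨c, hcP, hc⟩ := Ideal.Quotient.mk_mem_tightClosure_map_iff.1 (h P hP)
    obtain ⟨d, hdP, hd⟩ :=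
      exists_notMem_forall_mul_mem_nilradical (minimalPrimes.finite_of_isNoetherianRing R) hP
    exact hP.1.1.mul_notMem hdP hcP (hle (Ideal.mul_mem_eventuallyColon_sup hd hc))
end
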